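/- arXiv:0905.1019 — 2 statements merged into one kernel-verified Lean document; each statement's English description precedes it below -/
import Mathlib

section
/- Let H be a complex Hilbert space and let P₀ : B(H) → B(H) be defined by P₀(X) = Σ_α V_α† X V_α for a family {V_α} of bounded operators such that P₀ is a projection (P₀∘P₀ = P₀) whose image is a *-subalgebra X containing the identity. Then every element Y in the image of P₀ commutes with each V_α and each V_α†. -/
/-- If `P₀ X = ∑ α, (V α)† * X * (V α)` is a projection on `B(H)` whose
range is a unital *-subalgebra, then every element of the range of `P₀` commutes with
each `V α` and each `(V α)†`. -/
theorem stmt0 {H : Type*} [NormedAddCommGroup H] [InnerProductSpace ℂ H] [CompleteSpace H]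
    {ι : Type*} [Fintype ι] (V : ι → (H →L[ℂ] H))
    (P₀ : (H →L[ℂ] H) → (H →L[ℂ] H))
    (hP₀ : ∀ X, P₀ X = ∑ α, star (V α) * X * V α)
    (hproj : ∀ X, P₀ (P₀ X) = P₀ X)
    (S : StarSubalgebra ℂ (H →L[ℂ] H))
    (hrange : Set.range P₀ = S) :
    ∀ Y ∈ Set.range P₀, ∀ α, Commute (V α) Y ∧ Commute (star (V α)) Y := by
  have hfix : ∀ Z ∈ Set.range P₀, P₀ Z = Z := by
    rintro Z ⟨X, rfl⟩; exact hproj X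
  have hmemS : ∀ Z, Z ∈ Set.range P₀ ↔ Z ∈ S := fun Z => by rw [hrange]; rfl
  have hsum1 : ∑ β, star (V β) * V β = 1 := by
    have h1 : (1 : H →L[ℂ] H) ∈ Set.range P₀ := (hmemS 1).mpr S.one_mem'
    have := hfix 1 h1
    rw [hP₀] at this
    simpa [mul_one] using this
  have main : ∀ Y ∈ Set.range P₀, ∀ α, Commute (V α) Y := by
    intro Y hY α
    have hYS : Y ∈ S := (hmemS Y).mp hY
    have e1 : ∑ β, star (V β) * Y * V β = Y := by rw [← hP₀]; exact hfix Y hY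
    have e2 : ∑ β, star (V β) * star Y * V β = star Y := by
      rw [← hP₀]; exact hfix _ ((hmemS _).mpr (star_mem hYS))
    have e3 : ∑ β, star (V β) * (star Y * Y) * V β = star Y * Y := by
      rw [← hP₀]; exact hfix _ ((hmemS _).mpr (mul_mem (star_mem hYS) hYS))
    have key : ∑ β, star (V β * Y - Y * V β) * (V β * Y - Y * V β) = 0 := by
      have expand : ∀ β, star (V β * Y - Y * V β) * (V β * Y - Y * V β)
          = star Y * (star (V β) * V β * Y) - star Y * (star (V β) * Y * V β)
            - (star (V β) * star Y * V β) * Y + star (V β) * (star Y * Y) * V β := by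
        intro β
        simp only [star_sub, star_mul]
        noncomm_ring
      rw [Finset.sum_congr rfl (fun β _ => expand β)]
      rw [Finset.sum_add_distrib, Finset.sum_sub_distrib, Finset.sum_sub_distrib,
        ← Finset.mul_sum, ← Finset.mul_sum, ← Finset.sum_mul, ← Finset.sum_mul]
      rw [hsum1, e1, e2, e3]
      noncomm_ring
    have hz : star (V α * Y - Y * V α) * (V α * Y - Y * V α) = 0 :=
      (Finset.sum_eq_zero_iff_of_nonneg (fun β _ => star_mul_self_nonneg _)).mp key α
        (Finset.mem_univ α)
    have hc : V α * Y - Y * V α = 0 := by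
      have := CStarRing.star_mul_self_eq_zero_iff (V α * Y - Y * V α)
      exact this.mp hz
    exact sub_eq_zero.mp hc
  intro Y hY α
  refine ⟨main Y hY α, ?_⟩
  have h := (main (star Y) ((hmemS _).mpr (star_mem ((hmemS Y).mp hY))) α).star_star
  simpa using h
end

section
/- With the same hypotheses (P₀(X) = Σ_α V_α† X V_α a projection onto a unital *-subalgebra X of B(H)), the image of P₀ equals the commutant-type set C = {X ∈ B(H) : [V_α, X] = [V_α†, X] = 0 for all α}; in particular every element of C is fixed by P₀. -/
/-! If the Kraus map `Φ X = ∑ α, V α† X V α` is unital, then for every `X`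
`∑ α, [V α, X]† [V α, X] = X† Φ(1) X - X† Φ(X) - Φ(X†) X + Φ(X† X)`,
which vanishes as soon as `X`, `X†` and `X† X` are fixed by `Φ`. In a C*-algebra a vanishing sum
of elements `a† a` forces each `a = 0`, so every element of a *-subalgebra of fixed points
commutes with all `V α`, hence also with all `V α†`. Conversely, `Φ` fixes any `X` commuting with
all `V α`, because `Φ(X) = Φ(1) X = X`. -/

section KrausMap

variable {ι : Type*} [Fintype ι]

section Semiring

variable {R : Type*} [Semiring R] [StarRing R]

def krausMap (V : ι → R) (X : R) : R := ∑ α, star (V α) * X * V α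

theorem krausMap_eq_self_of_commute {V : ι → R} (hV : krausMap V 1 = 1) {X : R}
    (hX : ∀ α, Commute (V α) X) : krausMap V X = X := by
  have hterm (α : ι) : star (V α) * X * V α = star (V α) * 1 * V α * X := by
    rw [mul_one, mul_assoc, ← (hX α).eq, mul_assoc]
  rw [krausMap, Finset.sum_congr rfl fun α _ => hterm α, ← Finset.sum_mul, ← krausMap, hV,
    one_mul]

end Semiring

theorem sum_star_commutator_mul_commutator {R : Type*} [Ring R] [StarRing R]
    (V : ι → R) (X : R) :
    ∑ α, star (V α * X - X * V α) * (V α * X - X * V α) =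
      star X * krausMap V 1 * X - star X * krausMap V X - krausMap V (star X) * X +
        krausMap V (star X * X) := by
  have hterm (α : ι) : star (V α * X - X * V α) * (V α * X - X * V α) =
      star X * (star (V α) * 1 * V α) * X - star X * (star (V α) * X * V α) -
        star (V α) * star X * V α * X + star (V α) * (star X * X) * V α := by
    simp only [star_sub, star_mul]
    noncomm_ring
  simp only [krausMap, Finset.sum_congr rfl fun α _ => hterm α, Finset.sum_add_distrib,
    Finset.sum_sub_distrib, ← Finset.sum_mul, ← Finset.mul_sum]

end KrausMap

theorem CStarRing.eq_zero_of_sum_star_mul_self_eq_zero {A : Type*} [NonUnitalNormedRing A]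
    [StarRing A] [CStarRing A] [PartialOrder A] [StarOrderedRing A] {ι : Type*} {s : Finset ι}
    {a : ι → A} (h : ∑ i ∈ s, star (a i) * a i = 0) {i : ι} (hi : i ∈ s) : a i = 0 :=
  (CStarRing.star_mul_self_eq_zero_iff _).mp <|
    (Finset.sum_eq_zero_iff_of_nonneg fun j _ => star_mul_self_nonneg (a j)).mp h i hi

theorem StarSubalgebra.commute_of_forall_krausMap_eq_self {𝕜 A : Type*} [CommSemiring 𝕜]
    [StarRing 𝕜] [NormedRing A] [StarRing A] [CStarRing A] [PartialOrder A] [StarOrderedRing A]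
    [Algebra 𝕜 A] [StarModule 𝕜 A] {ι : Type*} [Fintype ι] {V : ι → A}
    (S : StarSubalgebra 𝕜 A) (hS : ∀ X ∈ S, krausMap V X = X) {X : A} (hX : X ∈ S) (α : ι) :
    Commute (V α) X ∧ Commute (star (V α)) X := by
  have hV : ∀ Y ∈ S, Commute (V α) Y := by
    intro Y hY
    have hsum : ∑ β, star (V β * Y - Y * V β) * (V β * Y - Y * V β) = 0 := by
      rw [sum_star_commutator_mul_commutator, hS 1 (one_mem S), hS Y hY, hS _ (star_mem hY),
        hS _ (mul_mem (star_mem hY) hY)]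
      noncomm_ring
    exact sub_eq_zero.mp
      (CStarRing.eq_zero_of_sum_star_mul_self_eq_zero hsum (Finset.mem_univ α))
  refine ⟨hV X hX, ?_⟩
  simpa using (hV _ (star_mem hX)).star_star

/-- With `P₀ X = ∑ α, (V α)† * X * (V α)` a projection onto a unital
*-subalgebra of `B(H)`, the range of `P₀` equals the commutant-type set
`C = {X | [V α, X] = [(V α)†, X] = 0 for all α}`; in particular every element of `C`
is fixed by `P₀`. -/
theorem stmt1 {H : Type*} [NormedAddCommGroup H] [InnerProductSpace ℂ H] [CompleteSpace H]
    {ι : Type*} [Fintype ι] (V : ι → (H →L[ℂ] H))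
    (P₀ : (H →L[ℂ] H) → (H →L[ℂ] H))
    (hP₀ : ∀ X, P₀ X = ∑ α, star (V α) * X * V α)
    (hproj : ∀ X, P₀ (P₀ X) = P₀ X)
    (S : StarSubalgebra ℂ (H →L[ℂ] H))
    (hrange : Set.range P₀ = S) :
    Set.range P₀ = {X : H →L[ℂ] H | ∀ α, Commute (V α) X ∧ Commute (star (V α)) X} ∧
    ∀ X : H →L[ℂ] H, (∀ α, Commute (V α) X ∧ Commute (star (V α)) X) → P₀ X = X := by
  obtain rfl : P₀ = krausMap V := funext hP₀
  have hfix : ∀ X ∈ S, krausMap V X = X := by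
    rintro X hX
    obtain ⟨Y, rfl⟩ : X ∈ Set.range (krausMap V) := hrange ▸ hX
    exact hproj Y
  have hcomm (X : H →L[ℂ] H) (hX : ∀ α, Commute (V α) X ∧ Commute (star (V α)) X) :
      krausMap V X = X :=
    krausMap_eq_self_of_commute (hfix 1 (one_mem S)) fun α => (hX α).1
  refine ⟨Set.Subset.antisymm ?_ fun X hX => ⟨X, hcomm X hX⟩, hcomm⟩
  rw [hrange]
  exact fun X hX => S.commute_of_forall_krausMap_eq_self hfix hX
end
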